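/- arXiv:1304.0303 — 5 statements merged into one kernel-verified Lean document; each statement's English description precedes it below -/
import Mathlib

section
/- Let R > 0, H > 0 and let a be any fixed number with 0 < a < R. Define U on the closed disk r ≤ R (where r² = x² + y²) by U(x,y) = (H / (2 ln(a/R)))·(1 − r²/a²) for 0 ≤ r ≤ a, and U(x,y) = H·ln(a/r)/ln(a/R) for a ≤ r ≤ R. Then U is continuously differentiable in the open disk r < R, U < 0 in the open disk r < a where it satisfies the wave equation ∂²U/∂x² − ∂²U/∂y² = 0, U > 0 in the open annulus a < r < R where it satisfies the Laplace equation ∂²U/∂x² + ∂²U/∂y² = 0, U = 0 on the circle r = a, and U = H on the boundary circle r = R. In particular U is a type-changing solution of equation (1) of the Dirichlet problem with constant boundary data H. -/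
/-!
`U` is the radial function `f (x² + y²)`, where `f s = c (1 - s / a²)` for `s ≤ a²` and
`f s = c log (a² / s)` for `s > a²`, with `c = H / (2 log (a / R)) < 0`. Both pieces vanish at
`s = a²` with slope `-c / a²` there, so `f` is `C¹` with `f' s = -c / max s a²`. For a radial
function, `∂²U/∂x² = 2 f' + 4 x² f''` and `∂²U/∂y² = 2 f' + 4 y² f''`. Inside the circle `f'' = 0`,
which gives the wave equation; outside, `f' + s f'' = 0`, which is the Laplace equation.
-/

open Real Filter Set

/-- Second partial derivative of `U` in the first (x) variable. -/
noncomputable def pxx (U : ℝ × ℝ → ℝ) (p : ℝ × ℝ) : ℝ :=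
  deriv (deriv (fun x => U (x, p.2))) p.1

/-- Second partial derivative of `U` in the second (y) variable. -/
noncomputable def pyy (U : ℝ × ℝ → ℝ) (p : ℝ × ℝ) : ℝ :=
  deriv (deriv (fun y => U (p.1, y))) p.2

theorem HasDerivAt.ite_le {g h : ℝ → ℝ} {b d : ℝ} (hg : HasDerivAt g d b)
    (hh : HasDerivAt h d b) (hgh : g b = h b) :
    HasDerivAt (fun s => if s ≤ b then g s else h s) d b := by
  rw [← hasDerivWithinAt_univ, ← Iic_union_Ici]
  refine (hg.hasDerivWithinAt.congr_of_mem (fun s hs => if_pos hs) self_mem_Iic).union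
    (hh.hasDerivWithinAt.congr_of_mem (fun s hs => ?_) self_mem_Ici)
  rcases (mem_Ici.1 hs).eq_or_lt with rfl | hbs
  · simp [hgh]
  · exact if_neg hbs.not_ge

section Radial

variable {f f' : ℝ → ℝ} {f'' : ℝ}

theorem deriv_comp_sq_add (hf : ∀ s, HasDerivAt f (f' s) s) (k : ℝ) :
    deriv (fun t => f (t ^ 2 + k)) = fun t => f' (t ^ 2 + k) * (2 * t) := by
  funext t
  refine HasDerivAt.deriv ?_
  exact ((hf _).comp t ((hasDerivAt_pow 2 t).add_const k)).congr_deriv (by simp)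

theorem deriv_deriv_comp_sq_add (hf : ∀ s, HasDerivAt f (f' s) s) {k x : ℝ}
    (hf' : HasDerivAt f' f'' (x ^ 2 + k)) :
    deriv (deriv fun t => f (t ^ 2 + k)) x = 2 * f' (x ^ 2 + k) + 4 * x ^ 2 * f'' := by
  rw [deriv_comp_sq_add hf]
  have h := (hf'.comp x ((hasDerivAt_pow 2 x).add_const k)).mul ((hasDerivAt_id x).const_mul 2)
  refine (h.congr_deriv ?_).deriv
  simp only [Nat.cast_ofNat, Nat.add_one_sub_one, pow_one, id_eq, Function.comp_apply, mul_one]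
  ring

theorem pxx_comp_sq_add_sq (hf : ∀ s, HasDerivAt f (f' s) s) {p : ℝ × ℝ}
    (hf' : HasDerivAt f' f'' (p.1 ^ 2 + p.2 ^ 2)) :
    pxx (fun q => f (q.1 ^ 2 + q.2 ^ 2)) p = 2 * f' (p.1 ^ 2 + p.2 ^ 2) + 4 * p.1 ^ 2 * f'' :=
  deriv_deriv_comp_sq_add hf hf'

theorem pyy_comp_sq_add_sq (hf : ∀ s, HasDerivAt f (f' s) s) {p : ℝ × ℝ}
    (hf' : HasDerivAt f' f'' (p.1 ^ 2 + p.2 ^ 2)) :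
    pyy (fun q => f (q.1 ^ 2 + q.2 ^ 2)) p = 2 * f' (p.1 ^ 2 + p.2 ^ 2) + 4 * p.2 ^ 2 * f'' := by
  rw [add_comm] at hf'
  simp only [pyy, add_comm (p.1 ^ 2)]
  exact deriv_deriv_comp_sq_add hf hf'

end Radial

noncomputable def modelProfile (a c s : ℝ) : ℝ :=
  if s ≤ a ^ 2 then c * (1 - s / a ^ 2) else c * log (a ^ 2 / s)

noncomputable def modelProfileDeriv (a c s : ℝ) : ℝ :=
  -c / max s (a ^ 2)

section Profile

variable {a : ℝ} (c : ℝ)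

theorem hasDerivAt_modelProfile_inner (s : ℝ) :
    HasDerivAt (fun s => c * (1 - s / a ^ 2)) (-c / a ^ 2) s :=
  ((((hasDerivAt_id s).div_const (a ^ 2)).const_sub 1).const_mul c).congr_deriv (by ring)

theorem hasDerivAt_modelProfile_outer (ha : a ≠ 0) {s : ℝ} (hs : s ≠ 0) :
    HasDerivAt (fun s => c * log (a ^ 2 / s)) (-c / s) s := by
  have h := (((hasDerivAt_inv hs).const_mul (a ^ 2)).log (by positivity)).const_mul c
  exact h.congr_deriv (by field_simp)

theorem hasDerivAt_modelProfile (ha : a ≠ 0) (s : ℝ) :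
    HasDerivAt (modelProfile a c) (modelProfileDeriv a c s) s := by
  have ha2 : 0 < a ^ 2 := by positivity
  rcases lt_trichotomy s (a ^ 2) with hs | rfl | hs
  · rw [modelProfileDeriv, max_eq_right hs.le]
    refine (hasDerivAt_modelProfile_inner c s).congr_of_eventuallyEq ?_
    filter_upwards [eventually_lt_nhds hs] with t ht
    exact if_pos ht.le
  · rw [modelProfileDeriv, max_self]
    refine (hasDerivAt_modelProfile_inner c _).ite_le
      (hasDerivAt_modelProfile_outer c ha ha2.ne') ?_
    simp [ha2.ne']
  · rw [modelProfileDeriv, max_eq_left hs.le]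
    refine (hasDerivAt_modelProfile_outer c ha (ha2.trans hs).ne').congr_of_eventuallyEq ?_
    filter_upwards [eventually_gt_nhds hs] with t ht
    exact if_neg ht.not_ge

theorem contDiff_modelProfile (ha : a ≠ 0) : ContDiff ℝ 1 (modelProfile a c) := by
  have ha2 : 0 < a ^ 2 := by positivity
  rw [contDiff_one_iff_deriv]
  refine ⟨fun s => (hasDerivAt_modelProfile c ha s).differentiableAt, ?_⟩
  rw [show deriv (modelProfile a c) = modelProfileDeriv a c from
    funext fun s => (hasDerivAt_modelProfile c ha s).deriv]
  exact continuous_const.div (continuous_id.max continuous_const)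
    fun s => (lt_max_of_lt_right ha2).ne'

theorem hasDerivAt_modelProfileDeriv_of_lt {s : ℝ} (hs : s < a ^ 2) :
    HasDerivAt (modelProfileDeriv a c) 0 s := by
  refine (hasDerivAt_const s (-c / a ^ 2)).congr_of_eventuallyEq ?_
  filter_upwards [eventually_lt_nhds hs] with t ht
  rw [modelProfileDeriv, max_eq_right ht.le]

theorem hasDerivAt_modelProfileDeriv_of_gt {s : ℝ} (hs : a ^ 2 < s) :
    HasDerivAt (modelProfileDeriv a c) (c / s ^ 2) s := by
  have hs0 : s ≠ 0 := ((sq_nonneg a).trans_lt hs).ne'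
  refine (((hasDerivAt_inv hs0).const_mul (-c)).congr_deriv (by field_simp)).congr_of_eventuallyEq
    ?_
  filter_upwards [eventually_gt_nhds hs] with t ht
  rw [modelProfileDeriv, max_eq_left ht.le, div_eq_mul_inv]

theorem modelProfile_sq (ha : a ≠ 0) : modelProfile a c (a ^ 2) = 0 := by
  simp [modelProfile, ha]

variable {c}

theorem modelProfile_neg (ha : a ≠ 0) (hc : c < 0) {s : ℝ} (hs : s < a ^ 2) :
    modelProfile a c s < 0 := by
  have : s / a ^ 2 < 1 := (div_lt_one (by positivity)).2 hs
  rw [modelProfile, if_pos hs.le]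
  exact mul_neg_of_neg_of_pos hc (by linarith)

theorem modelProfile_pos (ha : a ≠ 0) (hc : c < 0) {s : ℝ} (hs : a ^ 2 < s) :
    0 < modelProfile a c s := by
  have hs0 : 0 < s := (sq_pos_of_ne_zero ha).trans hs
  rw [modelProfile, if_neg hs.not_ge]
  exact mul_pos_of_neg_of_neg hc (log_neg (by positivity) ((div_lt_one hs0).2 hs))

end Profile

theorem two_mul_log_div_sqrt (a : ℝ) {s : ℝ} (hs : 0 ≤ s) :
    2 * log (a / √s) = log (a ^ 2 / s) := by
  rw [← Nat.cast_ofNat, ← log_pow, div_pow, sq_sqrt hs]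

theorem model_dirichlet_eq1_type_changing_general
    (R H a : ℝ) (hH : 0 < H) (ha0 : 0 < a) (haR : a < R)
    (U : ℝ × ℝ → ℝ)
    (hU : ∀ p : ℝ × ℝ, U p =
      if p.1 ^ 2 + p.2 ^ 2 ≤ a ^ 2 then
        H / (2 * Real.log (a / R)) * (1 - (p.1 ^ 2 + p.2 ^ 2) / a ^ 2)
      else
        H * Real.log (a / Real.sqrt (p.1 ^ 2 + p.2 ^ 2)) / Real.log (a / R)) :
    ContDiffOn ℝ 1 U {p : ℝ × ℝ | p.1 ^ 2 + p.2 ^ 2 < R ^ 2} ∧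
    (∀ p : ℝ × ℝ, p.1 ^ 2 + p.2 ^ 2 < a ^ 2 →
      U p < 0 ∧ pxx U p - pyy U p = 0) ∧
    (∀ p : ℝ × ℝ, a ^ 2 < p.1 ^ 2 + p.2 ^ 2 → p.1 ^ 2 + p.2 ^ 2 < R ^ 2 →
      0 < U p ∧ pxx U p + pyy U p = 0) ∧
    (∀ p : ℝ × ℝ, p.1 ^ 2 + p.2 ^ 2 = a ^ 2 → U p = 0) ∧
    (∀ p : ℝ × ℝ, p.1 ^ 2 + p.2 ^ 2 = R ^ 2 → U p = H) := by
  have hR : 0 < R := ha0.trans haR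
  have hL : log (a / R) < 0 := log_neg (div_pos ha0 hR) ((div_lt_one hR).2 haR)
  set c := H / (2 * log (a / R)) with hc_def
  have hc : c < 0 := div_neg_of_pos_of_neg hH (by linarith)
  have ha : a ≠ 0 := ha0.ne'
  obtain rfl : U = fun p => modelProfile a c (p.1 ^ 2 + p.2 ^ 2) := by
    funext p
    rw [hU, modelProfile]
    split_ifs
    · rfl
    · rw [← two_mul_log_div_sqrt a (by positivity)]
      ring
  have hf := hasDerivAt_modelProfile c ha
  have hU_smooth :=
    (contDiff_modelProfile c ha).comp ((contDiff_fst.pow 2).add (contDiff_snd.pow 2))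
  refine ⟨hU_smooth.contDiffOn, fun p hp => ⟨modelProfile_neg ha hc hp, ?_⟩,
    fun p hp _ => ⟨modelProfile_pos ha hc hp, ?_⟩,
    fun p hp => by simp only [hp, modelProfile_sq c ha], fun p hp => ?_⟩
  · have hf' := hasDerivAt_modelProfileDeriv_of_lt c hp
    rw [pxx_comp_sq_add_sq hf hf', pyy_comp_sq_add_sq hf hf']
    ring
  · have hf' := hasDerivAt_modelProfileDeriv_of_gt c hp
    rw [pxx_comp_sq_add_sq hf hf', pyy_comp_sq_add_sq hf hf', modelProfileDeriv,
      max_eq_left hp.le]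
    field_simp
    ring
  · have : ¬R ^ 2 ≤ a ^ 2 := by nlinarith
    simp only [hp, modelProfile, if_neg this, ← div_pow, log_pow, hc_def, Nat.cast_ofNat]
    exact div_mul_cancel₀ H (mul_ne_zero two_ne_zero hL.ne)

/-- The piecewise function `U = H/(2 ln(a/R)) (1 - r²/a²)` for `r ≤ a`,
`U = H ln(a/r)/ln(a/R)` for `a ≤ r ≤ R` is a type-changing solution of the
Dirichlet problem for equation (1) with constant boundary data `H > 0`:
it is C¹ in the open disk `r < R`, negative and a wave-equation solution in
`r < a`, positive and harmonic in the annulus `a < r < R`, vanishes on `r = a`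
and equals `H` on `r = R`. -/
theorem model_dirichlet_eq1_type_changing
    (R H a : ℝ) (hR : 0 < R) (hH : 0 < H) (ha0 : 0 < a) (haR : a < R)
    (U : ℝ × ℝ → ℝ)
    (hU : ∀ p : ℝ × ℝ, U p =
      if p.1 ^ 2 + p.2 ^ 2 ≤ a ^ 2 then
        H / (2 * Real.log (a / R)) * (1 - (p.1 ^ 2 + p.2 ^ 2) / a ^ 2)
      else
        H * Real.log (a / Real.sqrt (p.1 ^ 2 + p.2 ^ 2)) / Real.log (a / R)) :
    ContDiffOn ℝ 1 U {p : ℝ × ℝ | p.1 ^ 2 + p.2 ^ 2 < R ^ 2} ∧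
    (∀ p : ℝ × ℝ, p.1 ^ 2 + p.2 ^ 2 < a ^ 2 →
      U p < 0 ∧ pxx U p - pyy U p = 0) ∧
    (∀ p : ℝ × ℝ, a ^ 2 < p.1 ^ 2 + p.2 ^ 2 → p.1 ^ 2 + p.2 ^ 2 < R ^ 2 →
      0 < U p ∧ pxx U p + pyy U p = 0) ∧
    (∀ p : ℝ × ℝ, p.1 ^ 2 + p.2 ^ 2 = a ^ 2 → U p = 0) ∧
    (∀ p : ℝ × ℝ, p.1 ^ 2 + p.2 ^ 2 = R ^ 2 → U p = H) :=
  model_dirichlet_eq1_type_changing_general R H a hH ha0 haR U hU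
end

section
/- Let R > 0, H > 0, K > 0 and set a = R·e^{−H/(KR)}, so that 0 < a < R. Define U on the closed disk r ≤ R by U(x,y) = (H/(2 ln(a/R)))·(1 − r²/a²) for 0 ≤ r ≤ a and U(x,y) = H·ln(a/r)/ln(a/R) for a ≤ r ≤ R. Then on the boundary circle r = R one has U = H and ∂U/∂r = K; moreover a = R·e^{−H/(KR)} is the unique value in (0,R) for which this piecewise function satisfies ∂U/∂r = K at r = R. Thus the model Cauchy problem for equation (1) with data U = H > 0 and ∂U/∂r = K > 0 on r = R has exactly one type-changing solution of this form. -/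
/-!
Outside the hyperbolic disk `r ≤ a` the solution is the radial harmonic function
`H log(a/r) / log(a/R)`, which equals `H` at `r = R` for every `a` and has radial derivative
`-H / (R log(a/R))` there. Since `log(a/R)` ranges bijectively over `(-∞, 0)` as `a` ranges over
`(0, R)`, the condition `∂U/∂r = K` pins down `log(a/R) = -H/(KR)`, i.e. `a = R e^{-H/(KR)}`.
-/

open Real Set

noncomputable def typeChangingSolution (H R a : ℝ) (p : ℝ × ℝ) : ℝ :=
  if p.1 ^ 2 + p.2 ^ 2 ≤ a ^ 2 then
    H / (2 * log (a / R)) * (1 - (p.1 ^ 2 + p.2 ^ 2) / a ^ 2)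
  else
    H * log (a / √(p.1 ^ 2 + p.2 ^ 2)) / log (a / R)

lemma log_div_neg_of_mem_Ioo {a R : ℝ} (ha : a ∈ Ioo 0 R) : log (a / R) < 0 :=
  log_neg (div_pos ha.1 (ha.1.trans ha.2)) ((div_lt_one (ha.1.trans ha.2)).2 ha.2)

lemma typeChangingSolution_of_lt {H R a r : ℝ} {p : ℝ × ℝ} (ha : 0 ≤ a) (har : a < r)
    (hp : p.1 ^ 2 + p.2 ^ 2 = r ^ 2) :
    typeChangingSolution H R a p = H * log (a / r) / log (a / R) := by
  have hsq : ¬ r ^ 2 ≤ a ^ 2 := not_le.2 (pow_lt_pow_left₀ har ha two_ne_zero)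
  rw [typeChangingSolution, hp, if_neg hsq, sqrt_sq (ha.trans har.le)]

lemma typeChangingSolution_eq_of_boundary {H R a : ℝ} {p : ℝ × ℝ} (ha : a ∈ Ioo 0 R)
    (hp : p.1 ^ 2 + p.2 ^ 2 = R ^ 2) :
    typeChangingSolution H R a p = H := by
  rw [typeChangingSolution_of_lt ha.1.le ha.2 hp,
    mul_div_cancel_right₀ H (log_div_neg_of_mem_Ioo ha).ne]

lemma hasDerivAt_log_const_div {a r : ℝ} (ha : a ≠ 0) (hr : r ≠ 0) :
    HasDerivAt (fun t => log (a / t)) (-r⁻¹) r := by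
  have h := ((hasDerivAt_inv hr).const_mul a).log (div_ne_zero ha hr)
  convert h using 1
  · simp only [div_eq_mul_inv]
  · field_simp

lemma deriv_typeChangingSolution_radial {H R a : ℝ} {p : ℝ × ℝ} (ha : a ∈ Ioo 0 R)
    (hp : p.1 ^ 2 + p.2 ^ 2 = R ^ 2) :
    deriv (fun t => typeChangingSolution H R a (t / R * p.1, t / R * p.2)) R
      = -H / (R * log (a / R)) := by
  have hR : 0 < R := ha.1.trans ha.2
  have houter : (fun t => typeChangingSolution H R a (t / R * p.1, t / R * p.2))
      =ᶠ[nhds R] fun t => H / log (a / R) * log (a / t) := by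
    filter_upwards [Ioi_mem_nhds ha.2] with t (ht : a < t)
    have hpt : (t / R * p.1) ^ 2 + (t / R * p.2) ^ 2 = t ^ 2 := by
      field_simp
      linear_combination t ^ 2 * hp
    rw [typeChangingSolution_of_lt ha.1.le ht hpt]
    ring
  rw [houter.deriv_eq, ((hasDerivAt_log_const_div ha.1.ne' hR.ne').const_mul _).deriv]
  ring

lemma neg_div_mul_log_div_eq_iff {H K R a : ℝ} (ha : a ∈ Ioo 0 R) (hK : K ≠ 0) :
    -H / (R * log (a / R)) = K ↔ a = R * exp (-(H / (K * R))) := by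
  have hR : 0 < R := ha.1.trans ha.2
  have hlog := (log_div_neg_of_mem_Ioo ha).ne
  calc -H / (R * log (a / R)) = K ↔ log (a / R) = -(H / (K * R)) := by
        rw [div_eq_iff (mul_ne_zero hR.ne' hlog)]
        constructor <;> intro h
        · field_simp
          linear_combination -h
        · rw [h]
          field_simp
    _ ↔ a / R = exp (-(H / (K * R))) := by rw [← exp_eq_exp, exp_log (div_pos ha.1 hR)]
    _ ↔ a = R * exp (-(H / (K * R))) := by rw [div_eq_iff hR.ne', mul_comm]

lemma mul_exp_neg_mem_Ioo {R c : ℝ} (hR : 0 < R) (hc : 0 < c) : R * exp (-c) ∈ Ioo 0 R :=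
  ⟨by positivity, mul_lt_of_lt_one_right hR (exp_lt_one_iff.2 (neg_neg_of_pos hc))⟩

/-- For `H > 0`, `K > 0`, consider the family (indexed by `a ∈ (0,R)`) of
type-changing solutions `U a` of the model Dirichlet problem with data `H`:
`U a = H/(2 ln(a/R))(1 - r²/a²)` for `r ≤ a`, `U a = H ln(a/r)/ln(a/R)` for
`a ≤ r ≤ R`.  Then for `a = R·e^{-H/(KR)}` (which lies in `(0,R)`) one has
`U a = H` and `∂(U a)/∂r = K` on the boundary circle `r = R`, and this value
of `a` is the unique one in `(0,R)` for which the radial derivative condition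
`∂(U a)/∂r = K` holds at `r = R`.  (The radial derivative at a boundary point
`p` is the derivative of `t ↦ U a (t·p/R)` at `t = R`.) -/
theorem model_cauchy_eq1_unique_type_changing
    (R H K : ℝ) (hR : 0 < R) (hH : 0 < H) (hK : 0 < K)
    (U : ℝ → ℝ × ℝ → ℝ)
    (hU : ∀ a ∈ Set.Ioo (0 : ℝ) R, ∀ p : ℝ × ℝ, U a p =
      if p.1 ^ 2 + p.2 ^ 2 ≤ a ^ 2 then
        H / (2 * Real.log (a / R)) * (1 - (p.1 ^ 2 + p.2 ^ 2) / a ^ 2)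
      else
        H * Real.log (a / Real.sqrt (p.1 ^ 2 + p.2 ^ 2)) / Real.log (a / R)) :
    R * Real.exp (-(H / (K * R))) ∈ Set.Ioo (0 : ℝ) R ∧
    (∀ p : ℝ × ℝ, p.1 ^ 2 + p.2 ^ 2 = R ^ 2 →
      U (R * Real.exp (-(H / (K * R)))) p = H ∧
      deriv (fun t : ℝ =>
        U (R * Real.exp (-(H / (K * R)))) (t / R * p.1, t / R * p.2)) R = K) ∧
    (∀ a ∈ Set.Ioo (0 : ℝ) R,
      (∀ p : ℝ × ℝ, p.1 ^ 2 + p.2 ^ 2 = R ^ 2 →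
        deriv (fun t : ℝ => U a (t / R * p.1, t / R * p.2)) R = K) →
      a = R * Real.exp (-(H / (K * R)))) := by
  have hU' : ∀ a ∈ Ioo 0 R, U a = typeChangingSolution H R a := fun a ha => funext (hU a ha)
  have ha₀ := mul_exp_neg_mem_Ioo hR (by positivity : 0 < H / (K * R))
  refine ⟨ha₀, fun p hp => ⟨?_, ?_⟩, fun a ha hderiv => ?_⟩
  · rw [hU' _ ha₀, typeChangingSolution_eq_of_boundary ha₀ hp]
  · rw [hU' _ ha₀, deriv_typeChangingSolution_radial ha₀ hp,
      neg_div_mul_log_div_eq_iff ha₀ hK.ne']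
  · have hK' := hderiv (R, 0) (by simp)
    rw [hU' a ha, deriv_typeChangingSolution_radial ha (by simp)] at hK'
    exact (neg_div_mul_log_div_eq_iff ha hK.ne').1 hK'
end

section
/- Let C > 0. Define U on the closed upper half-plane y ≥ 0 by U(x,y) = C·e^x·sin y for 0 ≤ y ≤ π and U(x,y) = C·e^x·sinh(π − y) for y ≥ π. Then U is continuously differentiable on the open half-plane y > 0, U(x,0) = 0 for all x, U > 0 in the strip 0 < y < π where it satisfies the Laplace equation ∂²U/∂x² + ∂²U/∂y² = 0, U = 0 on the line y = π, and U < 0 in the half-plane y > π where it satisfies the wave equation ∂²U/∂x² − ∂²U/∂y² = 0. Hence for every C > 0 this is a type-changing solution of equation (1) in the upper half-plane with zero Dirichlet data on y = 0. -/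
/-!
Separation of variables: `U = C eˣ g(y)` with `g = sin` on `y ≤ π` and `g(y) = sinh (π - y)`
beyond. Since `exp'' = exp`, `sin'' = -sin` and `sinh(π - ·)'' = sinh(π - ·)`, the function solves
the Laplace equation where `g = sin` and the wave equation where `g = sinh (π - ·)`. The two
branches of `g` meet at `π` with the same value `0` and the same slope `-1`, so `g`, hence `U`,
is `C¹`.
-/

open Real Filter Topology

namespace ModelDirichlet

noncomputable def profile (y : ℝ) : ℝ :=
  if y ≤ π then sin y else sinh (π - y)

noncomputable def profileDeriv (y : ℝ) : ℝ :=
  if y ≤ π then cos y else -cosh (π - y)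

lemma profile_eventuallyEq_sin {y : ℝ} (hy : y < π) : profile =ᶠ[𝓝 y] sin := by
  filter_upwards [Iio_mem_nhds hy] with z hz
  exact if_pos (le_of_lt hz)

lemma profile_eventuallyEq_sinh {y : ℝ} (hy : π < y) :
    profile =ᶠ[𝓝 y] fun z => sinh (π - z) := by
  filter_upwards [Ioi_mem_nhds hy] with z hz
  exact if_neg (not_le.mpr hz)

lemma continuous_profile : Continuous profile :=
  Continuous.if_le continuous_sin (continuous_sinh.comp (continuous_const.sub continuous_id))
    continuous_id continuous_const fun y hy => by simp [hy]

lemma continuous_profileDeriv : Continuous profileDeriv :=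
  Continuous.if_le continuous_cos
    (continuous_cosh.comp (continuous_const.sub continuous_id)).neg
    continuous_id continuous_const fun y hy => by simp [hy]

lemma hasDerivAt_sinh_const_sub (a y : ℝ) :
    HasDerivAt (fun z => sinh (a - z)) (-cosh (a - y)) y := by
  simpa using ((hasDerivAt_id y).const_sub a).sinh

lemma hasDerivAt_profile (y : ℝ) : HasDerivAt profile (profileDeriv y) y := by
  refine hasDerivAt_of_hasDerivAt_of_ne' (x := π) (fun z hz => ?_) continuous_profile.continuousAt
    continuous_profileDeriv.continuousAt y
  rcases hz.lt_or_gt with hz | hz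
  · rw [profileDeriv, if_pos hz.le]
    exact (hasDerivAt_sin z).congr_of_eventuallyEq (profile_eventuallyEq_sin hz)
  · rw [profileDeriv, if_neg (not_le.mpr hz)]
    exact (hasDerivAt_sinh_const_sub π z).congr_of_eventuallyEq (profile_eventuallyEq_sinh hz)

lemma contDiff_profile : ContDiff ℝ 1 profile := by
  rw [contDiff_one_iff_deriv]
  refine ⟨fun y => (hasDerivAt_profile y).differentiableAt, ?_⟩
  rw [show deriv profile = profileDeriv from funext fun y => (hasDerivAt_profile y).deriv]
  exact continuous_profileDeriv

lemma profile_pos {y : ℝ} (h0 : 0 < y) (hπ : y < π) : 0 < profile y := by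
  rw [profile, if_pos hπ.le]
  exact sin_pos_of_pos_of_lt_pi h0 hπ

lemma profile_neg {y : ℝ} (hπ : π < y) : profile y < 0 := by
  rw [profile, if_neg (not_le.mpr hπ)]
  exact sinh_neg_iff.mpr (by linarith)

noncomputable def modelSolution (C : ℝ) (p : ℝ × ℝ) : ℝ :=
  C * exp p.1 * profile p.2

lemma contDiff_modelSolution (C : ℝ) : ContDiff ℝ 1 (modelSolution C) :=
  (contDiff_const.mul (contDiff_exp.comp contDiff_fst)).mul (contDiff_profile.comp contDiff_snd)

lemma pyy_eq_of_eventuallyEq {U : ℝ × ℝ → ℝ} {p : ℝ × ℝ} {f : ℝ → ℝ}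
    (h : (fun y => U (p.1, y)) =ᶠ[𝓝 p.2] f) : pyy U p = deriv (deriv f) p.2 :=
  h.deriv.deriv_eq

lemma pxx_modelSolution (C : ℝ) (p : ℝ × ℝ) : pxx (modelSolution C) p = modelSolution C p := by
  simp [pxx, modelSolution, deriv_mul_const_field']

lemma pyy_modelSolution_of_lt_pi (C : ℝ) {p : ℝ × ℝ} (hπ : p.2 < π) :
    pyy (modelSolution C) p = -modelSolution C p := by
  rw [pyy_eq_of_eventuallyEq (f := fun y => C * exp p.1 * sin y)
    ((profile_eventuallyEq_sin hπ).fun_comp (C * exp p.1 * ·))]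
  simp [modelSolution, deriv_const_mul_field', profile, hπ.le]

lemma pyy_modelSolution_of_pi_lt (C : ℝ) {p : ℝ × ℝ} (hπ : π < p.2) :
    pyy (modelSolution C) p = modelSolution C p := by
  rw [pyy_eq_of_eventuallyEq (f := fun y => C * exp p.1 * sinh (π - y))
    ((profile_eventuallyEq_sinh hπ).fun_comp (C * exp p.1 * ·))]
  simp [modelSolution, deriv_const_mul_field', deriv_comp_const_sub, profile, not_le.mpr hπ]

end ModelDirichlet

open ModelDirichlet in
/-- For every `C > 0`, the function `U = C eˣ sin y` for `0 ≤ y ≤ π`,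
`U = C eˣ sinh(π - y)` for `y ≥ π` is a type-changing solution of equation (1)
on the upper half-plane with zero Dirichlet data on `y = 0`: it is C¹ in the
open half-plane `y > 0`, vanishes on `y = 0`, is positive and harmonic in the
strip `0 < y < π`, vanishes on `y = π`, and is negative and a wave-equation
solution in the half-plane `y > π`. -/
theorem model_dirichlet_half_plane_eq1
    (C : ℝ) (hC : 0 < C)
    (U : ℝ × ℝ → ℝ)
    (hU : ∀ p : ℝ × ℝ, U p =
      if p.2 ≤ Real.pi then C * Real.exp p.1 * Real.sin p.2
      else C * Real.exp p.1 * Real.sinh (Real.pi - p.2)) :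
    ContDiffOn ℝ 1 U {p : ℝ × ℝ | 0 < p.2} ∧
    (∀ x : ℝ, U (x, 0) = 0) ∧
    (∀ p : ℝ × ℝ, 0 < p.2 → p.2 < Real.pi →
      0 < U p ∧ pxx U p + pyy U p = 0) ∧
    (∀ p : ℝ × ℝ, p.2 = Real.pi → U p = 0) ∧
    (∀ p : ℝ × ℝ, Real.pi < p.2 →
      U p < 0 ∧ pxx U p - pyy U p = 0) := by
  obtain rfl : U = modelSolution C := funext fun p => by
    rw [hU, modelSolution, profile, mul_ite]
  have hCexp (x : ℝ) : 0 < C * exp x := mul_pos hC (exp_pos x)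
  refine ⟨(contDiff_modelSolution C).contDiffOn, fun x => ?_, fun p h0 hπ => ⟨?_, ?_⟩,
    fun p hπ => ?_, fun p hπ => ⟨?_, ?_⟩⟩
  · simp [modelSolution, profile, pi_pos.le]
  · exact mul_pos (hCexp p.1) (profile_pos h0 hπ)
  · rw [pxx_modelSolution, pyy_modelSolution_of_lt_pi C hπ, add_neg_cancel]
  · simp [modelSolution, profile, hπ]
  · exact mul_neg_of_pos_of_neg (hCexp p.1) (profile_neg hπ)
  · rw [pxx_modelSolution, pyy_modelSolution_of_pi_lt C hπ, sub_self]
end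

section
/- Let f : [−1,0] → ℝ be continuously differentiable with f(−1) = 0 and f'(t) < 0 for all t ∈ (−1,0) (so f is strictly decreasing and f(x) < 0 on (−1,0]). Let D₂ = {(x,y) : y < 0, x + y > −1, x − y < 1}. Define U(x,y) = f((x−y−1)/2) − f((x+y−1)/2). Then U satisfies the wave equation ∂²U/∂x² − ∂²U/∂y² = 0 in D₂ (assuming f is twice differentiable), U(x, −x−1) = f(x) on the characteristic AC (for −1 ≤ x ≤ 0), U(x,0) = 0 for −1 ≤ x ≤ 1, U < 0 throughout D₂ (since (x−y−1)/2 > (x+y−1)/2 for y < 0 and f is decreasing), and ν(x) := ∂U/∂y(x,0) = −f'((x−1)/2) > 0 for −1 < x < 1. -/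
section DAlembert

variable {F G : ℝ → ℝ}

lemma deriv_comp_sub_const_add_comp_add_const
    (hF : Differentiable ℝ F) (hG : Differentiable ℝ G) (c : ℝ) :
    deriv (fun x => F (x - c) + G (x + c)) = fun x => deriv F (x - c) + deriv G (x + c) := by
  funext x
  rw [deriv_fun_add (by fun_prop) (by fun_prop), deriv_comp_sub_const, deriv_comp_add_const]

lemma deriv_comp_const_sub_add_comp_const_add
    (hF : Differentiable ℝ F) (hG : Differentiable ℝ G) (c : ℝ) :
    deriv (fun y => F (c - y) + G (c + y)) = fun y => -deriv F (c - y) + deriv G (c + y) := by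
  funext y
  rw [deriv_fun_add (by fun_prop) (by fun_prop), deriv_comp_const_sub, deriv_comp_const_add]

theorem pxx_eq_pyy_of_dAlembert (hF : ContDiff ℝ 2 F) (hG : ContDiff ℝ 2 G) (p : ℝ × ℝ) :
    pxx (fun q => F (q.1 - q.2) + G (q.1 + q.2)) p =
      pyy (fun q => F (q.1 - q.2) + G (q.1 + q.2)) p := by
  have hF' := hF.differentiable_deriv_two
  have hG' := hG.differentiable_deriv_two
  replace hF := hF.differentiable two_ne_zero
  replace hG := hG.differentiable two_ne_zero
  have hx := deriv_comp_sub_const_add_comp_add_const hF' hG' p.2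
  have hy := deriv_comp_const_sub_add_comp_const_add hF'.neg hG' p.1
  simp only [Pi.neg_apply, deriv.neg', neg_neg] at hy
  simp only [pxx, pyy, deriv_comp_sub_const_add_comp_add_const hF hG,
    deriv_comp_const_sub_add_comp_const_add hF hG, hx, hy]

end DAlembert

lemma hasDerivAt_comp_sub_const_div_const {f : ℝ → ℝ} {a b s : ℝ}
    (hf : DifferentiableAt ℝ f ((s - a) / b)) :
    HasDerivAt (fun s => f ((s - a) / b)) (deriv f ((s - a) / b) / b) s := by
  have h := hf.hasDerivAt.comp s (((hasDerivAt_id s).sub_const a).div_const b)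
  rwa [div_eq_mul_one_div]

/-- "Bottom-up" construction in the characteristic triangle
`D₂ = {y < 0, x + y > -1, x - y < 1}`: for a twice continuously differentiable
`f` with `f(-1) = 0` and `f' < 0` on `(-1,0)`, the function
`U(x,y) = f((x-y-1)/2) - f((x+y-1)/2)` satisfies the wave equation in `D₂`,
takes the value `f(x)` on the characteristic `AC : y = -x - 1` for
`x ∈ [-1,0]`, vanishes on the segment `y = 0`, `-1 ≤ x ≤ 1`, is negative
throughout `D₂`, and `ν(x) = ∂U/∂y(x,0) = -f'((x-1)/2) > 0` for
`-1 < x < 1`. -/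
theorem tricomi_bottom_up_construction
    (f : ℝ → ℝ) (hf : ContDiff ℝ 2 f) (hf1 : f (-1) = 0)
    (hf' : ∀ t ∈ Set.Ioo (-1 : ℝ) 0, deriv f t < 0)
    (U : ℝ × ℝ → ℝ)
    (hU : ∀ p : ℝ × ℝ,
      U p = f ((p.1 - p.2 - 1) / 2) - f ((p.1 + p.2 - 1) / 2)) :
    (∀ p : ℝ × ℝ, p.2 < 0 → -1 < p.1 + p.2 → p.1 - p.2 < 1 →
      pxx U p - pyy U p = 0 ∧ U p < 0) ∧
    (∀ x ∈ Set.Icc (-1 : ℝ) 0, U (x, -x - 1) = f x) ∧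
    (∀ x ∈ Set.Icc (-1 : ℝ) 1, U (x, 0) = 0) ∧
    (∀ x ∈ Set.Ioo (-1 : ℝ) 1,
      deriv (fun t => U (x, t)) 0 = -deriv f ((x - 1) / 2) ∧
      0 < -deriv f ((x - 1) / 2)) := by
  set F : ℝ → ℝ := fun s => f ((s - 1) / 2)
  have hF : ContDiff ℝ 2 F := hf.comp (by fun_prop)
  have hU_eq : U = fun q => F (q.1 - q.2) + (-F) (q.1 + q.2) := by
    funext q
    rw [hU, Pi.neg_apply, ← sub_eq_add_neg]
  have hf_anti : StrictAntiOn f (Set.Icc (-1) 0) :=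
    strictAntiOn_of_deriv_neg (convex_Icc _ _) hf.continuous.continuousOn
      (by rwa [interior_Icc])
  refine ⟨fun p hy hxy hxy' => ⟨?_, ?_⟩, fun x _ => ?_, fun x _ => by simp [hU],
    fun x hx => ⟨?_, ?_⟩⟩
  · rw [hU_eq, sub_eq_zero]
    exact pxx_eq_pyy_of_dAlembert hF hF.neg p
  · rw [hU, sub_neg]
    exact hf_anti ⟨by linarith, by linarith⟩ ⟨by linarith, by linarith⟩ (by linarith)
  · rw [hU, show (x - (-x - 1) - 1) / 2 = x by ring, show (x + (-x - 1) - 1) / 2 = -1 by ring,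
      hf1, sub_zero]
  · have hF_deriv : deriv F x = deriv f ((x - 1) / 2) / 2 :=
      (hasDerivAt_comp_sub_const_div_const (hf.differentiable two_ne_zero _)).deriv
    have hF_diff := hF.differentiable two_ne_zero
    simp only [hU_eq, deriv_comp_const_sub_add_comp_const_add hF_diff hF_diff.neg, deriv.neg',
      sub_zero, add_zero, hF_deriv]
    ring
  · linarith [hf' ((x - 1) / 2) ⟨by linarith [hx.1], by linarith [hx.2]⟩]
end

section
/- Define W(x,y) = (y/4)·(3(x+1)² − y²) and V(x,y) = (y/4)·(3(x+1)² + y²). Then: (i) W satisfies the Laplace equation ∂²W/∂x² + ∂²W/∂y² = 0 on all of ℝ², W(x,0) = 0, and W(x,y) > 0 whenever 0 < y < √3·(x+1); (ii) V satisfies the wave equation ∂²V/∂x² − ∂²V/∂y² = 0 on all of ℝ², V(x,0) = 0, V(x,y) < 0 whenever y < 0 and x > −1, and V(x, −x−1) = −(1+x)³ on the characteristic y = −x − 1; (iii) ∂W/∂y(x,0) = ∂V/∂y(x,0) = 3(x+1)²/4, so W and V match to first order across y = 0. Hence the function equal to W for y ≥ 0 and V for y ≤ 0 is a continuously differentiable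 type-changing solution of equation (1) (with boundary value f(x) = −(1+x)³ on the characteristic AC: y = −x − 1) on any Tricomi-type domain whose upper part lies in {0 < y < √3·(x+1)} and whose lower part lies in the triangle {y < 0, x + y > −1, x − y < 1}. -/
lemma hasDerivAt_cubic (a b c d s : ℝ) :
    HasDerivAt (fun t => a * t ^ 3 + b * t ^ 2 + c * t + d) (3 * a * s ^ 2 + 2 * b * s + c) s := by
  refine ((((hasDerivAt_pow 3 s).const_mul a).add ((hasDerivAt_pow 2 s).const_mul b)).add
    ((hasDerivAt_id s).const_mul c)).add_const d |>.congr_deriv ?_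
  norm_num
  ring

lemma deriv_cubic (a b c d : ℝ) :
    deriv (fun t => a * t ^ 3 + b * t ^ 2 + c * t + d) = fun s => 3 * a * s ^ 2 + 2 * b * s + c :=
  funext fun s => (hasDerivAt_cubic a b c d s).deriv

lemma deriv_deriv_cubic (a b c d s : ℝ) :
    deriv (deriv fun t => a * t ^ 3 + b * t ^ 2 + c * t + d) s = 6 * a * s + 2 * b := by
  have hquad : (fun s => 3 * a * s ^ 2 + 2 * b * s + c) =
      fun t => 0 * t ^ 3 + 3 * a * t ^ 2 + 2 * b * t + c := by
    funext t; ring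
  rw [deriv_cubic, hquad, (hasDerivAt_cubic 0 (3 * a) (2 * b) c s).deriv]
  ring

noncomputable def tricomiCubic (k : ℝ) (p : ℝ × ℝ) : ℝ :=
  p.2 / 4 * (3 * (p.1 + 1) ^ 2 + k * p.2 ^ 2)

namespace tricomiCubic

variable (k : ℝ)

lemma apply_snd_zero (x : ℝ) : tricomiCubic k (x, 0) = 0 := by
  simp [tricomiCubic]

lemma slice_fst (y : ℝ) : (fun x => tricomiCubic k (x, y)) =
    fun x => 0 * x ^ 3 + 3 * y / 4 * x ^ 2 + 3 * y / 2 * x + (3 * y / 4 + k * y ^ 3 / 4) := by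
  funext x; simp only [tricomiCubic]; ring

lemma slice_snd (x : ℝ) : (fun y => tricomiCubic k (x, y)) =
    fun y => k / 4 * y ^ 3 + 0 * y ^ 2 + 3 * (x + 1) ^ 2 / 4 * y + 0 := by
  funext y; simp only [tricomiCubic]; ring

lemma pxx_eq (p : ℝ × ℝ) : pxx (tricomiCubic k) p = 3 * p.2 / 2 := by
  rw [pxx, slice_fst, deriv_deriv_cubic]; ring

lemma pyy_eq (p : ℝ × ℝ) : pyy (tricomiCubic k) p = 3 * k * p.2 / 2 := by
  rw [pyy, slice_snd, deriv_deriv_cubic]; ring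

lemma deriv_snd_at_zero (x : ℝ) :
    deriv (fun y => tricomiCubic k (x, y)) 0 = 3 * (x + 1) ^ 2 / 4 := by
  rw [slice_snd, deriv_cubic]; ring

end tricomiCubic

lemma tricomiCubic_neg_of_nonneg {k : ℝ} (hk : 0 ≤ k) {p : ℝ × ℝ} (hy : p.2 < 0)
    (hx : -1 < p.1) : tricomiCubic k p < 0 := by
  have hx' : 0 < p.1 + 1 := by linarith
  have hfactor : 0 < 3 * (p.1 + 1) ^ 2 + k * p.2 ^ 2 := by positivity
  exact mul_neg_of_neg_of_pos (by linarith) hfactor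

lemma tricomiCubic_neg_one_pos {p : ℝ × ℝ} (hy : 0 < p.2) (hy' : p.2 < √3 * (p.1 + 1)) :
    0 < tricomiCubic (-1) p := by
  have hsq : p.2 ^ 2 < 3 * (p.1 + 1) ^ 2 := by
    calc p.2 ^ 2 < (√3 * (p.1 + 1)) ^ 2 := pow_lt_pow_left₀ hy' hy.le two_ne_zero
      _ = 3 * (p.1 + 1) ^ 2 := by rw [mul_pow, Real.sq_sqrt zero_le_three]
  unfold tricomiCubic
  nlinarith

lemma tricomiCubic_one_characteristic (x : ℝ) : tricomiCubic 1 (x, -x - 1) = -(1 + x) ^ 3 := by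
  simp only [tricomiCubic]; ring

lemma tricomiCubic_glue_eq :
    (fun p : ℝ × ℝ => if 0 ≤ p.2 then tricomiCubic (-1) p else tricomiCubic 1 p) =
      fun p => 3 * p.2 * (p.1 + 1) ^ 2 / 4 - ‖p.2‖ ^ (3 : ℝ) / 4 := by
  funext p
  rw [Real.norm_eq_abs, show (3 : ℝ) = (3 : ℕ) by norm_num, Real.rpow_natCast]
  split_ifs with hy
  · rw [abs_of_nonneg hy, tricomiCubic]; ring
  · rw [abs_of_neg (not_le.mp hy), tricomiCubic]; ring

lemma contDiff_tricomiCubic_glue :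
    ContDiff ℝ 1 (fun p : ℝ × ℝ => if 0 ≤ p.2 then tricomiCubic (-1) p else tricomiCubic 1 p) := by
  rw [tricomiCubic_glue_eq]
  exact ((by fun_prop : ContDiff ℝ 1 fun p : ℝ × ℝ => 3 * p.2 * (p.1 + 1) ^ 2).div_const 4).sub
    ((contDiff_snd.norm_rpow (by norm_num : (1 : ℝ) < 3)).div_const 4)

/-- Example for the Tricomi problem 2 with `f(x) = -(1+x)³`:
`W(x,y) = (y/4)(3(x+1)² - y²)` is harmonic on `ℝ²`, vanishes on `y = 0`, and
is positive where `0 < y < √3 (x+1)`; `V(x,y) = (y/4)(3(x+1)² + y²)` satisfies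
the wave equation on `ℝ²`, vanishes on `y = 0`, is negative where `y < 0` and
`x > -1`, and equals `-(1+x)³` on the characteristic `y = -x - 1`; both have
`∂/∂y` equal to `3(x+1)²/4` on `y = 0`, so the function equal to `W` for
`y ≥ 0` and to `V` for `y ≤ 0` is continuously differentiable: a type-changing
solution of equation (1). -/
theorem tricomi_example_cubic
    (W V : ℝ × ℝ → ℝ)
    (hW : ∀ p : ℝ × ℝ, W p = p.2 / 4 * (3 * (p.1 + 1) ^ 2 - p.2 ^ 2))
    (hV : ∀ p : ℝ × ℝ, V p = p.2 / 4 * (3 * (p.1 + 1) ^ 2 + p.2 ^ 2)) :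
    (∀ p : ℝ × ℝ, pxx W p + pyy W p = 0) ∧
    (∀ x : ℝ, W (x, 0) = 0) ∧
    (∀ p : ℝ × ℝ, 0 < p.2 → p.2 < Real.sqrt 3 * (p.1 + 1) → 0 < W p) ∧
    (∀ p : ℝ × ℝ, pxx V p - pyy V p = 0) ∧
    (∀ x : ℝ, V (x, 0) = 0) ∧
    (∀ p : ℝ × ℝ, p.2 < 0 → -1 < p.1 → V p < 0) ∧
    (∀ x : ℝ, V (x, -x - 1) = -(1 + x) ^ 3) ∧
    (∀ x : ℝ, deriv (fun t => W (x, t)) 0 = 3 * (x + 1) ^ 2 / 4 ∧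
      deriv (fun t => V (x, t)) 0 = 3 * (x + 1) ^ 2 / 4) ∧
    ContDiff ℝ 1 (fun p : ℝ × ℝ => if 0 ≤ p.2 then W p else V p) := by
  obtain rfl : W = tricomiCubic (-1) := funext fun p => by rw [hW, tricomiCubic]; ring
  obtain rfl : V = tricomiCubic 1 := funext fun p => by rw [hV, tricomiCubic]; ring
  refine ⟨fun p => ?_, tricomiCubic.apply_snd_zero _, fun p => tricomiCubic_neg_one_pos,
    fun p => ?_, tricomiCubic.apply_snd_zero _, fun p => tricomiCubic_neg_of_nonneg zero_le_one,
    tricomiCubic_one_characteristic,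
    fun x => ⟨tricomiCubic.deriv_snd_at_zero _ x, tricomiCubic.deriv_snd_at_zero _ x⟩,
    contDiff_tricomiCubic_glue⟩ <;>
  · rw [tricomiCubic.pxx_eq, tricomiCubic.pyy_eq]; ring
end
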